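/- arXiv:1112.3128 — 2 statements merged into one kernel-verified Lean document; each statement's English description precedes it below -/
import Mathlib

section
/- Let (X_i)_{i∈I} and (Y_i)_{i∈I} be families of nonzero complex vector spaces indexed by an infinite set I. The canonical ℂ-linear map Ψ : ⨂_{i∈I} (X_i →ₗ[ℂ] Y_i) → ((⨂_{i∈I} X_i) →ₗ[ℂ] (⨂_{i∈I} Y_i)), determined on elementary tensors by Ψ(⊗T)(⊗x) = ⊗(T_i(x_i)), is injective. -/
/-!
Write `u = ∑ c_T • ⨂ T` with `Ψ u = 0`. Fix a term `p` with no zero component and split the terms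
into the class `C` of those differing from `p` in finitely many coordinates, all inside a finite
set `S`, and the rest `B`. The functional `⨂ y ↦ ∏ g i (y i)`, taken to be `0` when infinitely
many factors differ from `1`, is multilinear. Choosing `x i, g i` off `S` with
`g i (p i (x i)) = 1` but `g i (T i (x i)) ≠ 1` for the finitely many `T ∈ B` with `T i ≠ p i`
(possible over an infinite field), it kills the `B`-terms of `Ψ u (⨂ x)` and turns the `C`-terms
into `∑ c_T ∏_{i ∈ S} g i (T i (x i))`. So these finite expressions vanish for all `x, g`; as the
functionals `T ↦ g (T x)` separate points, this forces `∑_{T ∈ C} c_T • ⨂ T = 0`, and induction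
on the number of terms finishes.
-/

open Function
open scoped TensorProduct

section LinearAlgebra

variable {K V W : Type*} [Field K] [AddCommGroup V] [Module K V] [AddCommGroup W] [Module K W]

theorem LinearMap.exists_forall_apply_ne_zero [Infinite K] {ι : Type*} [Finite ι]
    (f : ι → V →ₗ[K] W) (hf : ∀ k, f k ≠ 0) : ∃ x, ∀ k, f k x ≠ 0 :=
  Submodule.exists_forall_notMem_of_forall_ne_top (fun k => LinearMap.ker (f k))
    fun k => by simpa only [ne_eq, LinearMap.ker_eq_top] using hf k

theorem LinearMap.exists_dual_apply_eq_one_and_ne_one [Infinite K] {ι : Type*} [Finite ι]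
    {T : V →ₗ[K] W} (hT : T ≠ 0) (F : ι → V →ₗ[K] W) (hF : ∀ k, F k ≠ T) :
    ∃ (x : V) (g : Module.Dual K W), g (T x) = 1 ∧ ∀ k, g (F k x) ≠ 1 := by
  obtain ⟨x, hx⟩ := LinearMap.exists_forall_apply_ne_zero (K := K)
    (fun o : Option ι => o.elim T (F · - T))
    (Option.rec hT fun k => sub_ne_zero.mpr (hF k))
  obtain ⟨g, hg⟩ := Module.exists_dual_forall_apply_ne_zero (K := K)
    (fun o : Option ι => o.elim (T x) (F · x - T x))
    (Option.rec (hx none) fun k => hx (some k))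
  have hTx : g (T x) ≠ 0 := hg none
  refine ⟨x, (g (T x))⁻¹ • g, inv_mul_cancel₀ hTx, fun k => ?_⟩
  have hFx : g (F k x) - g (T x) ≠ 0 := by simpa using hg (some k)
  rw [LinearMap.smul_apply, smul_eq_mul, Ne, inv_mul_eq_one₀ hTx]
  exact fun h => hFx (sub_eq_zero.mpr h.symm)

theorem Module.Dual.exists_mem_span_eq_on_of_separating {Φ : Set (Module.Dual K W)}
    (hΦ : ∀ w ≠ 0, ∃ φ ∈ Φ, φ w ≠ 0) (U : Submodule K W) [FiniteDimensional K U]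
    (ξ : Module.Dual K U) : ∃ ψ ∈ Submodule.span K Φ, ∀ u : U, ψ u = ξ u := by
  have hspan : Submodule.span K (U.subtype.dualMap '' Φ) = ⊤ := by
    refine Submodule.span_eq_top_of_ne_zero fun u hu => ?_
    obtain ⟨φ, hφ, hφu⟩ := hΦ u (by simpa using hu)
    exact ⟨U.subtype.dualMap φ, Set.mem_image_of_mem _ hφ, hφu⟩
  have hξ : ξ ∈ (Submodule.span K Φ).map U.subtype.dualMap := by
    rw [← Submodule.span_image, hspan]; trivial
  obtain ⟨ψ, hψ, rfl⟩ := hξ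
  exact ⟨ψ, hψ, fun _ => rfl⟩

theorem Module.Dual.exists_sum_smul_eq_of_separating {Φ : Set (Module.Dual K W)}
    (hΦ : ∀ w ≠ 0, ∃ φ ∈ Φ, φ w ≠ 0) (F : Finset W) :
    ∃ (n : ℕ) (ψ : Fin n → Module.Dual K W) (u : Fin n → W),
      (∀ q, ψ q ∈ Submodule.span K Φ) ∧ ∀ w ∈ F, ∑ q, ψ q w • u q = w := by
  let U := Submodule.span K (F : Set W)
  let b := Module.finBasis K U
  choose ψ hψ hψU using fun q => exists_mem_span_eq_on_of_separating hΦ U (b.coord q)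
  refine ⟨_, ψ, fun q => b q, hψ, fun w hw => ?_⟩
  have hwU : w ∈ U := Submodule.subset_span hw
  have hrepr := congrArg U.subtype (b.sum_repr ⟨w, hwU⟩)
  simp only [map_sum, map_smul, Submodule.subtype_apply] at hrepr
  simpa [hψU _ ⟨w, hwU⟩] using hrepr

variable (K V W) in
def LinearMap.pointDuals : Set (Module.Dual K (V →ₗ[K] W)) :=
  Set.range fun xg : V × Module.Dual K W => xg.2 ∘ₗ LinearMap.applyₗ xg.1

theorem LinearMap.exists_mem_pointDuals_apply_ne_zero {T : V →ₗ[K] W} (hT : T ≠ 0) :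
    ∃ φ ∈ pointDuals K V W, φ T ≠ 0 := by
  obtain ⟨x, hx⟩ := DFunLike.ne_iff.mp hT
  obtain ⟨g, hg⟩ := Module.Projective.exists_dual_ne_zero K hx
  exact ⟨_, ⟨(x, g), rfl⟩, hg⟩

end LinearAlgebra

section FinprodOrZero

variable {K I : Type*} [Field K]

open Classical in
/-- Unlike `finprod`, which is `1` on families of infinite multiplicative support, this is `0`
there: that is what makes it multilinear. -/
noncomputable def finprodOrZero (f : I → K) : K :=
  if HasFiniteMulSupport f then ∏ᶠ i, f i else 0

theorem finprodOrZero_eq_prod_of_mulSupport_subset {f : I → K} {s : Finset I}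
    (h : mulSupport f ⊆ s) : finprodOrZero f = ∏ i ∈ s, f i := by
  rw [finprodOrZero, if_pos (show HasFiniteMulSupport f from s.finite_toSet.subset h),
    finprod_eq_prod_of_mulSupport_subset f h]

theorem finprodOrZero_of_infinite {f : I → K} (h : (mulSupport f).Infinite) :
    finprodOrZero f = 0 :=
  if_neg h

theorem hasFiniteMulSupport_update_iff [DecidableEq I] {f : I → K} {j : I} {a : K} :
    HasFiniteMulSupport (update f j a) ↔ HasFiniteMulSupport f := by
  have hsub : ∀ (g : I → K) (b : K), mulSupport (update g j b) ⊆ insert j (mulSupport g) :=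
    fun g b i hi => by
      by_cases hij : i = j
      · exact .inl hij
      · exact .inr (by simpa [hij] using hi)
  refine ⟨fun h => (h.insert j).subset ?_, fun h => (h.insert j).subset (hsub f a)⟩
  simpa using hsub (update f j a) (f j)

theorem finprodOrZero_update [DecidableEq I] (f : I → K) (j : I) (a : K) :
    finprodOrZero (update f j a) = a * finprodOrZero (update f j 1) := by
  by_cases hf : HasFiniteMulSupport f
  · have hf' : ∀ b, HasFiniteMulSupport (update f j b) :=
      fun _ => hasFiniteMulSupport_update_iff.mpr hf
    have hne : ∀ b, ∏ᶠ (i) (_ : i ≠ j), update f j b i = ∏ᶠ (i) (_ : i ≠ j), f i :=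
      fun b => finprod_congr fun i => finprod_congr fun hi => update_of_ne hi _ _
    rw [finprodOrZero, finprodOrZero, if_pos (hf' a), if_pos (hf' 1),
      ← mul_finprod_cond_ne j (hf' a), ← mul_finprod_cond_ne j (hf' 1), hne, hne, update_self,
      update_self, one_mul]
  · rw [finprodOrZero_of_infinite (mt hasFiniteMulSupport_update_iff.mp hf),
      finprodOrZero_of_infinite (mt hasFiniteMulSupport_update_iff.mp hf), mul_zero]

variable (K I) in
noncomputable def finprodOrZeroMultilinear : MultilinearMap K (fun _ : I => K) K where
  toFun := finprodOrZero
  map_update_add' f j a b := by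
    rw [finprodOrZero_update, finprodOrZero_update f j a, finprodOrZero_update f j b, add_mul]
  map_update_smul' f j c a := by
    rw [finprodOrZero_update, finprodOrZero_update f j a, smul_eq_mul, smul_eq_mul, mul_assoc]

@[simp]
theorem finprodOrZeroMultilinear_apply (f : I → K) :
    finprodOrZeroMultilinear K I f = finprodOrZero f :=
  rfl

end FinprodOrZero

namespace PiTensorProduct

variable {K I κ : Type*} [Field K]
  {W : I → Type*} [∀ i, AddCommGroup (W i)] [∀ i, Module K (W i)]

theorem sum_mul_apply_mul_prod_eq_zero_of_mem_span [DecidableEq I]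
    {Φ : ∀ i, Set (Module.Dual K (W i))} {j : I} {S : Finset I} (hjS : j ∉ S) (t : Finset κ)
    (d : κ → K) (v : κ → ∀ i, W i)
    (h : ∀ φ : ∀ i, Module.Dual K (W i), (∀ i ∈ insert j S, φ i ∈ Φ i) →
      ∑ k ∈ t, d k * ∏ i ∈ insert j S, φ i (v k i) = 0)
    (φ : ∀ i, Module.Dual K (W i)) (hφ : ∀ i ∈ S, φ i ∈ Φ i) {ψ : Module.Dual K (W j)}
    (hψ : ψ ∈ Submodule.span K (Φ j)) :
    ∑ k ∈ t, d k * ψ (v k j) * ∏ i ∈ S, φ i (v k i) = 0 := by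
  let L : Module.Dual K (W j) →ₗ[K] K :=
    ∑ k ∈ t, (d k * ∏ i ∈ S, φ i (v k i)) • Module.Dual.eval K (W j) (v k j)
  have hL : ∀ ψ, L ψ = ∑ k ∈ t, d k * ψ (v k j) * ∏ i ∈ S, φ i (v k i) := fun ψ => by
    simp only [L, LinearMap.sum_apply, LinearMap.smul_apply, Module.Dual.eval_apply, smul_eq_mul]
    exact Finset.sum_congr rfl fun k _ => by ring
  have hΦL : Φ j ⊆ LinearMap.ker L := fun ψ hψ => LinearMap.mem_ker.mpr <| by
    have hupd : ∀ i ∈ insert j S, update φ j ψ i ∈ Φ i := by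
      intro i hi
      rcases Finset.mem_insert.mp hi with rfl | hi
      · simpa using hψ
      · simpa [ne_of_mem_of_not_mem hi hjS] using hφ i hi
    rw [hL, ← h _ hupd]
    refine Finset.sum_congr rfl fun k _ => ?_
    rw [Finset.prod_insert hjS, update_self, mul_assoc]
    congr 2
    exact Finset.prod_congr rfl fun i hi => by rw [update_of_ne (ne_of_mem_of_not_mem hi hjS)]
  rw [← hL, ← LinearMap.mem_ker]
  exact Submodule.span_le.mpr hΦL hψ

theorem sum_smul_tprod_eq_zero_of_forall_sum_mul_prod_eq_zero
    {Φ : ∀ i, Set (Module.Dual K (W i))} (hΦ : ∀ i, ∀ w : W i, w ≠ 0 → ∃ φ ∈ Φ i, φ w ≠ 0)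
    (t : Finset κ) (S : Finset I) (d : κ → K) (v : κ → ∀ i, W i) (w : ∀ i, W i)
    (hv : ∀ k ∈ t, ∀ i ∉ S, v k i = w i)
    (h : ∀ φ : ∀ i, Module.Dual K (W i), (∀ i ∈ S, φ i ∈ Φ i) →
      ∑ k ∈ t, d k * ∏ i ∈ S, φ i (v k i) = 0) :
    ∑ k ∈ t, d k • tprod K (v k) = 0 := by
  classical
  induction S using Finset.induction_on generalizing d v w with
  | empty =>
    have hvw : ∀ k ∈ t, v k = w := fun k hk => funext fun i => hv k hk i (Finset.notMem_empty i)
    have hd : ∑ k ∈ t, d k = 0 := by simpa using h 0 (by simp)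
    rw [Finset.sum_congr rfl fun k hk => by rw [hvw k hk], ← Finset.sum_smul, hd, zero_smul]
  | @insert j S hjS ih =>
    obtain ⟨n, ψ, u, hψ, hu⟩ :=
      Module.Dual.exists_sum_smul_eq_of_separating (hΦ j) (t.image fun k => v k j)
    have hexpand : ∀ k ∈ t,
        tprod K (v k) = ∑ q, ψ q (v k j) • tprod K (update (v k) j (u q)) := by
      intro k hk
      conv_lhs => rw [← update_eq_self j (v k), ← hu _ (Finset.mem_image_of_mem _ hk)]
      simp only [MultilinearMap.map_update_sum, MultilinearMap.map_update_smul]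
    calc ∑ k ∈ t, d k • tprod K (v k)
        = ∑ q, ∑ k ∈ t, (d k * ψ q (v k j)) • tprod K (update (v k) j (u q)) := by
          rw [Finset.sum_comm]
          refine Finset.sum_congr rfl fun k hk => ?_
          simp only [hexpand k hk, Finset.smul_sum, smul_smul]
      _ = 0 := Finset.sum_eq_zero fun q _ => by
          refine ih _ _ (update w j (u q)) (fun k hk i hi => ?_) fun φ hφ => ?_
          · by_cases hij : i = j
            · subst hij; simp
            · simpa [hij] using hv k hk i (by simp [hij, hi])
          · rw [← sum_mul_apply_mul_prod_eq_zero_of_mem_span hjS t d v h φ hφ (hψ q)]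
            refine Finset.sum_congr rfl fun k _ => congrArg _ (Finset.prod_congr rfl fun i hi => ?_)
            rw [update_of_ne (ne_of_mem_of_not_mem hi hjS)]

variable {X Y : I → Type*} [∀ i, AddCommGroup (X i)] [∀ i, Module K (X i)]
  [∀ i, AddCommGroup (Y i)] [∀ i, Module K (Y i)]

theorem sum_mul_prod_eq_zero_of_piTensorHomMap_eq_zero [Infinite K]
    {p : ∀ i, X i →ₗ[K] Y i} (hp : ∀ i, p i ≠ 0) {S : Finset I}
    {C B : Finset (∀ i, X i →ₗ[K] Y i)} (hC : ∀ T ∈ C, ∀ i ∉ S, T i = p i)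
    (hB : ∀ T ∈ B, {i | T i ≠ p i}.Infinite) (c : (∀ i, X i →ₗ[K] Y i) → K)
    (h : piTensorHomMap (∑ T ∈ C, c T • tprod K T + ∑ T ∈ B, c T • tprod K T) = 0)
    (φ : ∀ i, Module.Dual K (X i →ₗ[K] Y i))
    (hφ : ∀ i ∈ S, φ i ∈ LinearMap.pointDuals K (X i) (Y i)) :
    ∑ T ∈ C, c T * ∏ i ∈ S, φ i (T i) = 0 := by
  classical
  have hchoice : ∀ i, ∃ (x : X i) (g : Module.Dual K (Y i)),
      (i ∈ S → ∀ T : X i →ₗ[K] Y i, φ i T = g (T x)) ∧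
      (i ∉ S → g (p i x) = 1 ∧ ∀ T ∈ B, T i ≠ p i → g (T i x) ≠ 1) := by
    intro i
    by_cases hi : i ∈ S
    · obtain ⟨⟨x, g⟩, hxg⟩ := hφ i hi
      exact ⟨x, g, fun _ T => by rw [← hxg]; rfl, fun h => absurd hi h⟩
    · obtain ⟨x, g, h1, h2⟩ := LinearMap.exists_dual_apply_eq_one_and_ne_one (hp i)
        (fun T : B.filter (fun T => T i ≠ p i) => T.1 i) fun T => (Finset.mem_filter.mp T.2).2
      exact ⟨x, g, fun h => absurd h hi,
        fun _ => ⟨h1, fun T hT hTi => h2 ⟨T, Finset.mem_filter.mpr ⟨hT, hTi⟩⟩⟩⟩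
  choose x g hS hSc using hchoice
  have hΛ := congrArg
    (fun F => lift ((finprodOrZeroMultilinear K I).compLinearMap g) (F (tprod K x))) h
  simp only [map_add, map_sum, map_smul, LinearMap.add_apply, LinearMap.coe_sum,
    LinearMap.coe_smul, Finset.sum_apply, Pi.smul_apply, piTensorHomMap_tprod_tprod, lift.tprod,
    MultilinearMap.compLinearMap_apply, finprodOrZeroMultilinear_apply, smul_eq_mul,
    LinearMap.zero_apply, map_zero] at hΛ
  have hCterm : ∀ T ∈ C, finprodOrZero (fun i => g i (T i (x i))) = ∏ i ∈ S, φ i (T i) := by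
    intro T hT
    rw [finprodOrZero_eq_prod_of_mulSupport_subset fun i hi => ?_]
    · exact Finset.prod_congr rfl fun i hi => (hS i hi (T i)).symm
    · by_contra hiS
      have hTi : g i (T i (x i)) = 1 := by rw [hC T hT i hiS]; exact (hSc i hiS).1
      exact hi hTi
  have hBterm : ∀ T ∈ B, finprodOrZero (fun i => g i (T i (x i))) = 0 := by
    intro T hT
    refine finprodOrZero_of_infinite (((hB T hT).sdiff S.finite_toSet).mono ?_)
    rintro i ⟨hTi, hiS⟩
    exact (hSc i hiS).2 T hT hTi
  rwa [Finset.sum_congr rfl fun T hT => by rw [hCterm T hT],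
    Finset.sum_eq_zero (s := B) fun T hT => by rw [hBterm T hT, mul_zero], add_zero] at hΛ

theorem sum_smul_tprod_eq_zero_of_piTensorHomMap_eq_zero [Infinite K]
    (c : (∀ i, X i →ₗ[K] Y i) → K) (s : Finset (∀ i, X i →ₗ[K] Y i))
    (h : piTensorHomMap (∑ T ∈ s, c T • tprod K T) = 0) : ∑ T ∈ s, c T • tprod K T = 0 := by
  classical
  induction s using Finset.strongInduction with | H s ih =>
  by_cases hp : ∃ p ∈ s, ∀ i, p i ≠ 0
  swap
  · push Not at hp
    refine Finset.sum_eq_zero fun T hT => ?_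
    obtain ⟨i, hi⟩ := hp T hT
    rw [(tprod K).map_coord_zero i hi, smul_zero]
  obtain ⟨p, hps, hp⟩ := hp
  let C := s.filter fun T => {i | T i ≠ p i}.Finite
  have hCfin : (⋃ T ∈ (C : Set (∀ i, X i →ₗ[K] Y i)), {i | T i ≠ p i}).Finite :=
    C.finite_toSet.biUnion fun T hT => (Finset.mem_filter.mp hT).2
  have hC : ∀ T ∈ C, ∀ i ∉ hCfin.toFinset, T i = p i := fun T hT i hi =>
    by_contra fun hne => hi (hCfin.mem_toFinset.mpr (Set.mem_biUnion hT hne))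
  rw [← Finset.sum_filter_add_sum_filter_not s fun T => {i | T i ≠ p i}.Finite] at h ⊢
  have hCzero : ∑ T ∈ C, c T • tprod K T = 0 :=
    sum_smul_tprod_eq_zero_of_forall_sum_mul_prod_eq_zero
      (fun _ _ => LinearMap.exists_mem_pointDuals_apply_ne_zero) C _ c id p hC
      (sum_mul_prod_eq_zero_of_piTensorHomMap_eq_zero hp hC
        (fun T hT => by simp only [Finset.mem_filter] at hT; exact hT.2) c h)
  rw [hCzero, zero_add] at h ⊢
  exact ih _ (Finset.filter_ssubset.mpr ⟨p, hps, by simp⟩) h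

theorem piTensorHomMap_injective [Infinite K] :
    Injective (piTensorHomMap : (⨂[K] i, X i →ₗ[K] Y i) →ₗ[K] _) := by
  refine (injective_iff_map_eq_zero _).mpr fun u hu => ?_
  have hu_mem : u ∈ Submodule.span K (Set.range (tprod K)) := by
    rw [span_tprod_eq_top]; trivial
  obtain ⟨c, rfl⟩ := Finsupp.mem_span_range_iff_exists_finsupp.mp hu_mem
  exact sum_smul_tprod_eq_zero_of_piTensorHomMap_eq_zero c c.support hu

end PiTensorProduct

theorem piTensorHom_injective_general {I : Type*}
    (X : I → Type*) (Y : I → Type*)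
    [∀ i, AddCommGroup (X i)] [∀ i, Module ℂ (X i)]
    [∀ i, AddCommGroup (Y i)] [∀ i, Module ℂ (Y i)]
    (Ψ : (⨂[ℂ] i, (X i →ₗ[ℂ] Y i)) →ₗ[ℂ] (⨂[ℂ] i, X i) →ₗ[ℂ] ⨂[ℂ] i, Y i)
    (hΨ : ∀ (T : ∀ i, X i →ₗ[ℂ] Y i) (x : ∀ i, X i),
      Ψ (PiTensorProduct.tprod ℂ T) (PiTensorProduct.tprod ℂ x) =
        PiTensorProduct.tprod ℂ (fun i => T i (x i))) :
    Function.Injective Ψ := by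
  have hΨ_eq : Ψ = PiTensorProduct.piTensorHomMap := by
    ext T x
    simp [hΨ]
  exact hΨ_eq ▸ PiTensorProduct.piTensorHomMap_injective

/-- The canonical map `Ψ : ⨂_{i∈I} L(X_i; Y_i) → L(⨂_{i∈I} X_i; ⨂_{i∈I} Y_i)`, determined on
elementary tensors by `Ψ(⊗T)(⊗x) = ⊗(T_i(x_i))`, is injective for families of nonzero
complex vector spaces over an infinite index set. -/
theorem piTensorHom_injective {I : Type*} [Infinite I]
    (X : I → Type*) (Y : I → Type*)
    [∀ i, AddCommGroup (X i)] [∀ i, Module ℂ (X i)] [∀ i, Nontrivial (X i)]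
    [∀ i, AddCommGroup (Y i)] [∀ i, Module ℂ (Y i)] [∀ i, Nontrivial (Y i)]
    (Ψ : (⨂[ℂ] i, (X i →ₗ[ℂ] Y i)) →ₗ[ℂ] (⨂[ℂ] i, X i) →ₗ[ℂ] ⨂[ℂ] i, Y i)
    (hΨ : ∀ (T : ∀ i, X i →ₗ[ℂ] Y i) (x : ∀ i, X i),
      Ψ (PiTensorProduct.tprod ℂ T) (PiTensorProduct.tprod ℂ x) =
        PiTensorProduct.tprod ℂ (fun i => T i (x i))) :
    Function.Injective Ψ :=
  piTensorHom_injective_general X Y Ψ hΨ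
end

section
/- Let (H_i)_{i∈I} be complex Hilbert spaces, let F ⊆ I be a finite subset, and for each i ∈ I let T_i : H_i →L[ℂ] H_i be a continuous linear operator such that T_i is unitary (T_i† ∘ T_i = 1 = T_i ∘ T_i†, where † is the Hilbert-space adjoint) for every i ∈ I∖F. Let M : ⨂_{i∈I} H_i → ⨂_{i∈I} H_i be the linear map induced by the family (T_i) (PiTensorProduct.map, so M(⊗x) = ⊗(T_i(x_i))), and let B be any map on (⨂^un_{i∈I} H_i) × (⨂^un_{i∈I} H_i) with values in ℂ that is conjugate-ℂ-linear in the first variable, ℂ-linear in the second, and satisfies B(⊗x, ⊗y) = h(x,y) whenever ‖x_i‖ = ‖y_i‖ = 1 for every i. Then: (i) M maps ⨂^un_{i∈I} H_i into itself; (ii) for every ξ ∈ ⨂^un_{i∈I} H_i, B(M(ξ), M(ξ)).re ≤ (∏_{i∈F} ‖T_i‖²)·B(ξ, ξ).re; and (iii) for all ξ, η ∈ ⨂^un_{i∈I} H_i, B(M(ξ), η) = B(ξ, M†(η)), where M† is the linear map induced by the family of adjoints (T_i†). -/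
open scoped TensorProduct Classical ComplexConjugate

/-- The form `h(x,y)`: the (finite) product `∏_{i∈I} ⟪x_i, y_i⟫` when `⟪x_i, y_i⟫ = 1` for
all but finitely many `i`, and `0` otherwise. -/
noncomputable def hform {I : Type*} (H : I → Type*) [∀ i, NormedAddCommGroup (H i)]
    [∀ i, InnerProductSpace ℂ (H i)] (x y : ∀ i, H i) : ℂ :=
  if {i | (inner ℂ (x i) (y i) : ℂ) ≠ 1}.Finite then ∏ᶠ i, (inner ℂ (x i) (y i) : ℂ) else 0

/-- `⨂^un_{i∈I} H_i`: the span in `⨂_{i∈I} H_i` of the elementary tensors of families of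
unit vectors. -/
noncomputable def unTensorSpan {I : Type*} (H : I → Type*) [∀ i, NormedAddCommGroup (H i)]
    [∀ i, InnerProductSpace ℂ (H i)] : Submodule ℂ (⨂[ℂ] i, H i) :=
  Submodule.span ℂ {t | ∃ x : ∀ i, H i, (∀ i, ‖x i‖ = 1) ∧ t = PiTensorProduct.tprod ℂ x}

/-!
Because `T i` is isometric off `F`, the image `⨂ (T i (x i))` of an elementary tensor of unit
vectors is a scalar multiple of another such tensor, so `M` preserves the span, and on elementary
tensors `B (M ⊗x) ⊗y = h (T x) y = h x (T† y) = B ⊗x (M† ⊗y)`, which extends by sesquilinearity.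

For the bound write `ξ = ∑ c k • ⊗(x k)`: then `B ξ ξ` is the quadratic form of the matrix
`h (x k) (x l)`, which is the Hadamard product of the indicator of "`x k` and `x l` differ in
finitely many coordinates" (positive semidefinite, being an equivalence relation) with the Gram
matrices `⟪x k i, x l i⟫` over a finite set of coordinates `S ⊇ F`. The same holds for `M ξ` with
`T i (x k i)` in place of `x k i`; these Gram matrices agree off `F` and are dominated by
`‖T i‖ ^ 2` times the original ones on `F`, so Schur's product theorem gives the bound.
-/

open scoped ComplexOrder
open Matrix

namespace Matrix

variable {ι κ α 𝕜 : Type*} [RCLike 𝕜]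

lemma hadamard_sub [NonUnitalNonAssocRing α] (A B C : Matrix ι ι α) :
    A ⊙ (B - C) = A ⊙ B - A ⊙ C := by
  ext k l
  simp only [sub_apply, hadamard_apply, mul_sub]

lemma PosSemidef.hadamard_sub_hadamard {A A' B B' : Matrix ι ι 𝕜} (hA' : A'.PosSemidef)
    (hA : (A - A').PosSemidef) (hB' : B'.PosSemidef) (hB : (B - B').PosSemidef) :
    (A ⊙ B - A' ⊙ B').PosSemidef := by
  have hBB : B.PosSemidef := by simpa using hB.add hB'
  have hsplit : A ⊙ B - A' ⊙ B' = (A - A') ⊙ B + A' ⊙ (B - B') := by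
    ext k l
    simp only [sub_apply, add_apply, hadamard_apply]
    ring
  rw [hsplit]
  exact (hA.hadamard hBB).add (hA'.hadamard hB)

def finsetHadamard [CommMonoid α] (S : Finset κ) (A : κ → Matrix ι ι α) : Matrix ι ι α :=
  of fun k l => ∏ i ∈ S, A i k l

lemma finsetHadamard_insert [CommMonoid α] [DecidableEq κ] {S : Finset κ} {a : κ} (ha : a ∉ S)
    (A : κ → Matrix ι ι α) :
    finsetHadamard (insert a S) A = A a ⊙ finsetHadamard S A := by
  ext k l
  simp [finsetHadamard, Finset.prod_insert ha]

lemma finsetHadamard_smul [CommMonoid α] (S : Finset κ) (c : κ → α) (A : κ → Matrix ι ι α) :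
    finsetHadamard S (fun i => c i • A i) = (∏ i ∈ S, c i) • finsetHadamard S A := by
  ext k l
  simp [finsetHadamard, Finset.prod_mul_distrib]

lemma posSemidef_finsetHadamard_empty [Fintype ι] (A : κ → Matrix ι ι 𝕜) :
    (finsetHadamard ∅ A).PosSemidef := by
  convert posSemidef_gram 𝕜 (fun _ : ι => (1 : 𝕜))
  ext k l
  simp [finsetHadamard]

lemma posSemidef_finsetHadamard [Fintype ι] {S : Finset κ} {A : κ → Matrix ι ι 𝕜}
    (hA : ∀ i ∈ S, (A i).PosSemidef) : (finsetHadamard S A).PosSemidef := by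
  classical
  induction S using Finset.induction_on with
  | empty => exact posSemidef_finsetHadamard_empty A
  | insert a S ha ih =>
    rw [finsetHadamard_insert ha]
    exact (hA a (S.mem_insert_self a)).hadamard (ih fun i hi => hA i (S.mem_insert_of_mem hi))

lemma PosSemidef.finsetHadamard_sub_finsetHadamard [Fintype ι] {S : Finset κ}
    {A A' : κ → Matrix ι ι 𝕜}
    (hA' : ∀ i ∈ S, (A' i).PosSemidef) (hA : ∀ i ∈ S, (A i - A' i).PosSemidef) :
    (finsetHadamard S A - finsetHadamard S A').PosSemidef := by
  classical
  induction S using Finset.induction_on with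
  | empty =>
    have hempty : finsetHadamard ∅ A = finsetHadamard ∅ A' := by simp [finsetHadamard]
    simpa [hempty] using (PosSemidef.zero : (0 : Matrix ι ι 𝕜).PosSemidef)
  | insert a S ha ih =>
    have hS' : ∀ i ∈ S, (A' i).PosSemidef := fun i hi => hA' i (S.mem_insert_of_mem hi)
    rw [finsetHadamard_insert ha, finsetHadamard_insert ha]
    exact (hA' a (S.mem_insert_self a)).hadamard_sub_hadamard (hA a (S.mem_insert_self a))
      (posSemidef_finsetHadamard hS') (ih hS' fun i hi => hA i (S.mem_insert_of_mem hi))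

lemma posSemidef_of_equivalence [Fintype ι] {r : ι → ι → Prop} (hr : Equivalence r) :
    (of fun k l => if r k l then (1 : 𝕜) else 0).PosSemidef := by
  let s : Setoid ι := ⟨r, hr⟩
  convert posSemidef_gram 𝕜 (fun k => EuclideanSpace.single (Quotient.mk s k).out (1 : 𝕜))
  ext k l
  simp [EuclideanSpace.inner_single_left, Quotient.out_inj, Quotient.eq, s]

end Matrix

section HForm

variable {I : Type*} {H : I → Type*} [∀ i, NormedAddCommGroup (H i)]
  [∀ i, InnerProductSpace ℂ (H i)]

lemma hform_eq_prod {S : Finset I} {x y : ∀ i, H i} (h : ∀ i ∉ S, inner ℂ (x i) (y i) = 1) :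
    hform H x y = ∏ i ∈ S, inner ℂ (x i) (y i) := by
  have hsupp : Function.mulSupport (fun i => inner ℂ (x i) (y i)) ⊆ S :=
    fun i hi => by_contra fun hiS => hi (h i hiS)
  have hfin : {i | inner ℂ (x i) (y i) ≠ 1}.Finite := S.finite_toSet.subset hsupp
  rw [hform, if_pos hfin, finprod_eq_prod_of_mulSupport_subset _ hsupp]

lemma hform_eq_zero {x y : ∀ i, H i} (h : {i | inner ℂ (x i) (y i) ≠ 1}.Infinite) :
    hform H x y = 0 :=
  if_neg h

lemma hform_smul_smul (S : Finset I) {a b : I → ℂ} (ha : ∀ i ∉ S, a i = 1)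
    (hb : ∀ i ∉ S, b i = 1) (x y : ∀ i, H i) :
    hform H (fun i => a i • x i) (fun i => b i • y i)
      = (∏ i ∈ S, conj (a i) * b i) * hform H x y := by
  have hinner : ∀ i,
      inner ℂ (a i • x i) (b i • y i) = conj (a i) * b i * inner ℂ (x i) (y i) := fun i => by
    rw [inner_smul_left, inner_smul_right, mul_assoc]
  have hoff : ∀ i ∉ S, inner ℂ (a i • x i) (b i • y i) = inner ℂ (x i) (y i) := fun i hi => by
    rw [hinner, ha i hi, hb i hi, map_one, one_mul, one_mul]
  by_cases hfin : {i | inner ℂ (x i) (y i) ≠ 1}.Finite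
  · set U := S ∪ hfin.toFinset
    have hxyU : ∀ i ∉ U, inner ℂ (x i) (y i) = 1 := fun i hi => by
      by_contra h; exact hi (Finset.mem_union_right _ (hfin.mem_toFinset.2 h))
    have hSU : S ⊆ U := Finset.subset_union_left
    calc hform H (fun i => a i • x i) (fun i => b i • y i)
        = ∏ i ∈ U, conj (a i) * b i * inner ℂ (x i) (y i) := by
          rw [hform_eq_prod (S := U) fun i hi => by
            rw [hoff i fun h => hi (hSU h), hxyU i hi]]
          exact Finset.prod_congr rfl fun i _ => hinner i
      _ = (∏ i ∈ S, conj (a i) * b i) * hform H x y := by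
          rw [Finset.prod_mul_distrib, hform_eq_prod hxyU,
            Finset.prod_subset hSU fun i _ hi => by rw [ha i hi, hb i hi, map_one, one_mul]]
  · have hinf : {i | inner ℂ (a i • x i) (b i • y i) ≠ 1}.Infinite := fun h =>
      hfin <| ((h.union S.finite_toSet).subset fun i hi => by
        by_cases hiS : i ∈ S
        · exact Or.inr hiS
        · exact Or.inl fun h => hi ((hoff i hiS).symm.trans h))
    rw [hform_eq_zero hinf, hform_eq_zero hfin, mul_zero]

end HForm

lemma equivalence_finite_ne {I : Type*} {α : I → Type*} :
    Equivalence fun x y : (∀ i, α i) => {i | x i ≠ y i}.Finite where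
  refl x := by simp
  symm h := by simpa only [ne_comm] using h
  trans hxy hyz := (hxy.union hyz).subset fun i hi => by
    by_contra h
    simp only [Set.mem_union, Set.mem_ofPred_eq, not_or, not_not] at h
    exact hi (h.1.trans h.2)

lemma exists_finset_superset_of_finite {ι I : Type*} [Finite ι] (s : ι → Set I) :
    ∃ S : Finset I, ∀ k, (s k).Finite → s k ⊆ S := by
  obtain ⟨S, hS⟩ := (Set.finite_iUnion fun k => Set.finite_iUnion
    fun h : (s k).Finite => h).exists_finset_coe
  exact ⟨S, fun k hk => hS ▸ Set.subset_iUnion₂ (s := fun k (_ : (s k).Finite) => s k) k hk⟩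

section HFormGram

variable {I : Type*} {H : I → Type*} [∀ i, NormedAddCommGroup (H i)]
  [∀ i, InnerProductSpace ℂ (H i)]

lemma hform_map_eq_ite_mul_prod {F S : Finset I} (T : ∀ i, H i →L[ℂ] H i)
    (hT : ∀ i ∉ F, ∀ u v, inner ℂ (T i u) (T i v) = inner ℂ u v) {x y : ∀ i, H i}
    (hx : ∀ i, ‖x i‖ = 1) (hy : ∀ i, ‖y i‖ = 1) (hFS : F ⊆ S)
    (hS : {i | x i ≠ y i}.Finite → {i | x i ≠ y i} ⊆ S) :
    hform H (fun i => T i (x i)) (fun i => T i (y i))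
      = (if {i | x i ≠ y i}.Finite then 1 else 0)
        * ∏ i ∈ S, inner ℂ (T i (x i)) (T i (y i)) := by
  have hTxy : ∀ i ∉ F, inner ℂ (T i (x i)) (T i (y i)) = 1 ↔ x i = y i := fun i hi => by
    rw [hT i hi, inner_eq_one_iff_of_norm_eq_one (hx i) (hy i)]
  split_ifs with hfin
  · rw [one_mul]
    refine hform_eq_prod fun i hi => (hTxy i fun h => hi (hFS h)).2 ?_
    by_contra h
    exact hi (hS hfin h)
  · rw [zero_mul]
    refine hform_eq_zero fun h => hfin ((h.union F.finite_toSet).subset fun i hi => ?_)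
    by_cases hiF : i ∈ F
    · exact Or.inr hiF
    · exact Or.inl fun h => hi ((hTxy i hiF).1 h)

variable (H) in
noncomputable def hformGram {ι : Type*} (x : ι → ∀ i, H i) : Matrix ι ι ℂ :=
  Matrix.of fun k l => hform H (x k) (x l)

lemma hformGram_map_eq_hadamard {ι : Type*} {F S : Finset I} (T : ∀ i, H i →L[ℂ] H i)
    (hT : ∀ i ∉ F, ∀ u v, inner ℂ (T i u) (T i v) = inner ℂ u v) {x : ι → ∀ i, H i}
    (hx : ∀ k i, ‖x k i‖ = 1) (hFS : F ⊆ S)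
    (hS : ∀ k l, {i | x k i ≠ x l i}.Finite → {i | x k i ≠ x l i} ⊆ S) :
    hformGram H (fun k i => T i (x k i))
      = (Matrix.of fun k l => if {i | x k i ≠ x l i}.Finite then 1 else 0)
        ⊙ finsetHadamard S (fun i => gram ℂ (fun k => T i (x k i))) := by
  ext k l
  exact hform_map_eq_ite_mul_prod T hT (hx k) (hx l) hFS (hS k l)

lemma posSemidef_smul_hformGram_sub_hformGram {ι : Type*} [Fintype ι] (F : Finset I)
    (T : ∀ i, H i →L[ℂ] H i) (hT : ∀ i ∉ F, ∀ u v, inner ℂ (T i u) (T i v) = inner ℂ u v)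
    {x : ι → ∀ i, H i} (hx : ∀ k i, ‖x k i‖ = 1) :
    (((∏ i ∈ F, ‖T i‖ ^ 2 : ℝ) : ℂ) • hformGram H x
      - hformGram H (fun k i => T i (x k i))).PosSemidef := by
  obtain ⟨S₀, hS₀⟩ := exists_finset_superset_of_finite fun p : ι × ι => {i | x p.1 i ≠ x p.2 i}
  set S := F ∪ S₀
  have hFS : F ⊆ S := Finset.subset_union_left
  have hS : ∀ k l, {i | x k i ≠ x l i}.Finite → {i | x k i ≠ x l i} ⊆ S :=
    fun k l h => (hS₀ (k, l) h).trans (by simp [S])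
  have hGram := hformGram_map_eq_hadamard (fun i => ContinuousLinearMap.id ℂ (H i)) (F := ∅)
    (by simp) hx (Finset.empty_subset _) hS
  simp only [ContinuousLinearMap.id_apply] at hGram
  have hscale : (∏ i ∈ F, (‖T i‖ ^ 2 : ℂ)) • finsetHadamard S (fun i => gram ℂ fun k => x k i)
      = finsetHadamard S
          (fun i => (if i ∈ F then (‖T i‖ ^ 2 : ℂ) else 1) • gram ℂ fun k => x k i) := by
    rw [finsetHadamard_smul, Finset.prod_ite_mem, Finset.inter_eq_right.2 hFS]
  push_cast
  rw [hGram, hformGram_map_eq_hadamard T hT hx hFS hS, ← hadamard_smul, hscale, ← hadamard_sub]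
  refine (posSemidef_of_equivalence (equivalence_finite_ne.comap x)).hadamard
    (PosSemidef.finsetHadamard_sub_finsetHadamard (fun i _ => posSemidef_gram ℂ _) fun i _ => ?_)
  by_cases hiF : i ∈ F
  · have h := posSemidef_opNorm_smul_gram_sub_gram (fun k => x k i) (T i)
    rw [← Complex.coe_smul, Complex.ofReal_pow] at h
    simp only [hiF, if_true]
    exact h
  · have hgram : gram ℂ (fun k => T i (x k i)) = gram ℂ (fun k => x k i) := by
      ext k l; exact hT i hiF _ _
    simpa [hiF, hgram] using (PosSemidef.zero : (0 : Matrix ι ι ℂ).PosSemidef)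

end HFormGram

lemma exists_norm_eq_one_smul_eq {𝕜 E : Type*} [RCLike 𝕜] [NormedAddCommGroup E]
    [NormedSpace 𝕜 E] [Nontrivial E] (v : E) : ∃ w : E, ‖w‖ = 1 ∧ v = (‖v‖ : 𝕜) • w := by
  by_cases hv : v = 0
  · obtain ⟨u, hu⟩ := exists_ne (0 : E)
    exact ⟨(‖u‖⁻¹ : 𝕜) • u, norm_smul_inv_norm hu, by simp [hv]⟩
  · refine ⟨(‖v‖⁻¹ : 𝕜) • v, norm_smul_inv_norm hv, ?_⟩
    rw [smul_smul, mul_inv_cancel₀ (by simpa using hv), one_smul]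

lemma PiTensorProduct.tprod_smul_of_eq_one {ι R : Type*} {M : ι → Type*} [CommSemiring R]
    [∀ i, AddCommMonoid (M i)] [∀ i, Module R (M i)] {S : Finset ι} {a : ι → R}
    (ha : ∀ i ∉ S, a i = 1) (x : ∀ i, M i) :
    tprod R (fun i => a i • x i) = (∏ i ∈ S, a i) • tprod R x := by
  classical
  have hpiece : (fun i => a i • x i) = S.piecewise (fun i => a i • x i) x := by
    ext i
    by_cases hi : i ∈ S <;> simp [hi, ha]
  rw [hpiece, MultilinearMap.map_piecewise_smul]

lemma nontrivial_of_norm_eq_one {I : Type*} {H : I → Type*} [∀ i, NormedAddCommGroup (H i)]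
    {x : ∀ i, H i} (hx : ∀ i, ‖x i‖ = 1) (i : I) : Nontrivial (H i) :=
  nontrivial_of_ne (x i) 0 (by rw [← norm_ne_zero_iff, hx i]; exact one_ne_zero)

section UnitTensors

variable {I : Type*} {H : I → Type*} [∀ i, NormedAddCommGroup (H i)]
  [∀ i, InnerProductSpace ℂ (H i)]

lemma exists_eq_smul_of_norm_eq_one [∀ i, Nontrivial (H i)] {F : Finset I} {x : ∀ i, H i}
    (hx : ∀ i ∉ F, ‖x i‖ = 1) :
    ∃ (a : I → ℂ) (x' : ∀ i, H i), (∀ i ∉ F, a i = 1) ∧ (∀ i, ‖x' i‖ = 1) ∧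
      x = fun i => a i • x' i := by
  choose x' hx' using fun i => exists_norm_eq_one_smul_eq (𝕜 := ℂ) (x i)
  exact ⟨fun i => ‖x i‖, x', fun i hi => by simp [hx i hi], fun i => (hx' i).1,
    funext fun i => (hx' i).2⟩

lemma tprod_mem_unTensorSpan [∀ i, Nontrivial (H i)] {F : Finset I} {x : ∀ i, H i}
    (hx : ∀ i ∉ F, ‖x i‖ = 1) : PiTensorProduct.tprod ℂ x ∈ unTensorSpan H := by
  obtain ⟨a, x', ha, hx', rfl⟩ := exists_eq_smul_of_norm_eq_one hx
  rw [PiTensorProduct.tprod_smul_of_eq_one ha]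
  exact Submodule.smul_mem _ _ (Submodule.subset_span ⟨x', hx', rfl⟩)

lemma map_mem_unTensorSpan {F : Finset I} {T : ∀ i, H i →ₗ[ℂ] H i}
    (hT : ∀ i ∉ F, ∀ u, ‖T i u‖ = ‖u‖) {ξ : ⨂[ℂ] i, H i} (hξ : ξ ∈ unTensorSpan H) :
    PiTensorProduct.map T ξ ∈ unTensorSpan H := by
  refine (Submodule.span_le (p := (unTensorSpan H).comap (PiTensorProduct.map T))).2 ?_ hξ
  rintro _ ⟨x, hx, rfl⟩
  have := nontrivial_of_norm_eq_one hx
  rw [SetLike.mem_coe, Submodule.mem_comap, PiTensorProduct.map_tprod]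
  exact tprod_mem_unTensorSpan fun i hi => by rw [hT i hi, hx i]

variable (H) in
lemma span_unitTensors_eq_top : Submodule.span ℂ {ξ : unTensorSpan H | ∃ x : ∀ i, H i,
    (∀ i, ‖x i‖ = 1) ∧ (ξ : ⨂[ℂ] i, H i) = PiTensorProduct.tprod ℂ x} = ⊤ :=
  Submodule.span_span_coe_preimage

end UnitTensors

lemma LinearMap.apply_sum_smul_sum_smul {R M ι : Type*} [CommSemiring R] [StarRing R]
    [AddCommMonoid M] [Module R M] [Fintype ι] (B : M →ₗ⋆[R] M →ₗ[R] R) (c : ι → R)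
    (v : ι → M) :
    B (∑ k, c k • v k) (∑ k, c k • v k) = star c ⬝ᵥ (of (fun k l => B (v k) (v l)) *ᵥ c) := by
  simp only [map_sum, LinearMap.map_smulₛₗ₂, LinearMap.sum_apply, map_smul, dotProduct, mulVec,
    Finset.mul_sum, Matrix.of_apply, Pi.star_apply, smul_eq_mul, starRingEnd_apply]
  rw [Finset.sum_comm]
  exact Finset.sum_congr rfl fun k _ => Finset.sum_congr rfl fun l _ => by ring

section Form

variable {I : Type*} {H : I → Type*} [∀ i, NormedAddCommGroup (H i)]
  [∀ i, InnerProductSpace ℂ (H i)]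

def AgreesWithHForm (B : unTensorSpan H →ₗ⋆[ℂ] unTensorSpan H →ₗ[ℂ] ℂ) : Prop :=
  ∀ (ξ η : unTensorSpan H) (x y : ∀ i, H i), (∀ i, ‖x i‖ = 1) → (∀ i, ‖y i‖ = 1) →
    (ξ : ⨂[ℂ] i, H i) = PiTensorProduct.tprod ℂ x →
    (η : ⨂[ℂ] i, H i) = PiTensorProduct.tprod ℂ y → B ξ η = hform H x y

namespace AgreesWithHForm

variable {B : unTensorSpan H →ₗ⋆[ℂ] unTensorSpan H →ₗ[ℂ] ℂ}

lemma apply_eq_hform (hB : AgreesWithHForm B) [∀ i, Nontrivial (H i)] {F : Finset I}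
    {ξ η : unTensorSpan H} {x y : ∀ i, H i} (hx : ∀ i ∉ F, ‖x i‖ = 1) (hy : ∀ i ∉ F, ‖y i‖ = 1)
    (hξ : (ξ : ⨂[ℂ] i, H i) = PiTensorProduct.tprod ℂ x)
    (hη : (η : ⨂[ℂ] i, H i) = PiTensorProduct.tprod ℂ y) :
    B ξ η = hform H x y := by
  obtain ⟨a, x', ha, hx', rfl⟩ := exists_eq_smul_of_norm_eq_one hx
  obtain ⟨b, y', hb, hy', rfl⟩ := exists_eq_smul_of_norm_eq_one hy
  have hξ' : ξ = (∏ i ∈ F, a i) • ⟨_, Submodule.subset_span ⟨x', hx', rfl⟩⟩ :=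
    Subtype.ext (by rw [hξ, PiTensorProduct.tprod_smul_of_eq_one ha]; rfl)
  have hη' : η = (∏ i ∈ F, b i) • ⟨_, Submodule.subset_span ⟨y', hy', rfl⟩⟩ :=
    Subtype.ext (by rw [hη, PiTensorProduct.tprod_smul_of_eq_one hb]; rfl)
  rw [hξ', hη', LinearMap.map_smulₛₗ₂, map_smul, hB _ _ x' y' hx' hy' rfl rfl,
    hform_smul_smul F ha hb, Finset.prod_mul_distrib, map_prod]
  simp only [smul_eq_mul, starRingEnd_apply]
  ring

lemma re_apply_map_le (hB : AgreesWithHForm B) (F : Finset I) (T : ∀ i, H i →L[ℂ] H i)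
    (hT : ∀ i ∉ F, ∀ u v, inner ℂ (T i u) (T i v) = inner ℂ u v)
    (M : unTensorSpan H →ₗ[ℂ] unTensorSpan H)
    (hM : ∀ (ξ : unTensorSpan H) (x : ∀ i, H i), (ξ : ⨂[ℂ] i, H i) = PiTensorProduct.tprod ℂ x →
      (M ξ : ⨂[ℂ] i, H i) = PiTensorProduct.tprod ℂ (fun i => T i (x i)))
    (ξ : unTensorSpan H) :
    (B (M ξ) (M ξ)).re ≤ (∏ i ∈ F, ‖T i‖ ^ 2) * (B ξ ξ).re := by
  obtain ⟨n, c, g, rfl⟩ := Submodule.mem_span_set'.1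
    ((span_unitTensors_eq_top H).symm ▸ Submodule.mem_top : ξ ∈ Submodule.span ℂ _)
  choose x hx hgx using fun k => (g k).2
  have hGram : Matrix.of (fun k l => B (g k) (g l)) = hformGram H x := by
    ext k l
    exact hB _ _ _ _ (hx k) (hx l) (hgx k) (hgx l)
  have hTx : ∀ k, ∀ i ∉ F, ‖T i (x k i)‖ = 1 := fun k i hi => by
    rw [← hx k i]
    exact (LinearMap.norm_map_iff_inner_map_map (T i : H i →ₗ[ℂ] H i)).2 (hT i hi) (x k i)
  have hGramM : Matrix.of (fun k l => B (M (g k)) (M (g l)))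
      = hformGram H (fun k i => T i (x k i)) := by
    ext k l
    have := nontrivial_of_norm_eq_one (hx k)
    exact hB.apply_eq_hform (hTx k) (hTx l) (hM _ _ (hgx k)) (hM _ _ (hgx l))
  have hpos := (posSemidef_smul_hformGram_sub_hformGram F T hT hx).dotProduct_mulVec_nonneg c
  rw [sub_mulVec, smul_mulVec, dotProduct_sub, dotProduct_smul, ← hGram, ← hGramM,
    ← LinearMap.apply_sum_smul_sum_smul, ← LinearMap.apply_sum_smul_sum_smul, smul_eq_mul] at hpos
  have hMsum : M (∑ k, c k • (g k : unTensorSpan H)) = ∑ k, c k • M (g k) := by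
    rw [map_sum]; simp_rw [map_smul]
  have hre := (Complex.nonneg_iff.1 hpos).1
  rw [Complex.sub_re, Complex.re_ofReal_mul] at hre
  rw [hMsum]
  linarith

lemma apply_map_left_eq_apply_map_right [∀ i, CompleteSpace (H i)] (hB : AgreesWithHForm B)
    (F : Finset I) (T : ∀ i, H i →L[ℂ] H i) (hT : ∀ i ∉ F, ∀ u, ‖T i u‖ = ‖u‖)
    (hT' : ∀ i ∉ F, ∀ u, ‖(T i).adjoint u‖ = ‖u‖) (M Md : unTensorSpan H →ₗ[ℂ] unTensorSpan H)
    (hM : ∀ (ξ : unTensorSpan H) (x : ∀ i, H i), (ξ : ⨂[ℂ] i, H i) = PiTensorProduct.tprod ℂ x →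
      (M ξ : ⨂[ℂ] i, H i) = PiTensorProduct.tprod ℂ (fun i => T i (x i)))
    (hMd : ∀ (ξ : unTensorSpan H) (x : ∀ i, H i), (ξ : ⨂[ℂ] i, H i) = PiTensorProduct.tprod ℂ x →
      (Md ξ : ⨂[ℂ] i, H i) = PiTensorProduct.tprod ℂ (fun i => (T i).adjoint (x i)))
    (ξ η : unTensorSpan H) :
    B (M ξ) η = B ξ (Md η) := by
  suffices B.comp M = B.compl₂ Md from LinearMap.congr_fun₂ this ξ η
  refine LinearMap.ext_on (span_unitTensors_eq_top H) ?_
  rintro ξ ⟨x, hx, hξ⟩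
  refine LinearMap.ext_on (span_unitTensors_eq_top H) ?_
  rintro η ⟨y, hy, hη⟩
  have := nontrivial_of_norm_eq_one hx
  have hadj : hform H (fun i => T i (x i)) y = hform H x (fun i => (T i).adjoint (y i)) := by
    simp only [hform, ContinuousLinearMap.adjoint_inner_right]
  simp only [LinearMap.comp_apply, LinearMap.compl₂_apply]
  rw [hB.apply_eq_hform (F := F) (fun i hi => (hT i hi _).trans (hx i)) (fun i _ => hy i)
      (hM ξ x hξ) hη,
    hB.apply_eq_hform (F := F) (fun i _ => hx i) (fun i hi => (hT' i hi _).trans (hy i)) hξ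
      (hMd η y hη), hadj]

end AgreesWithHForm

end Form

theorem piTensor_map_operator_bounded_general {I : Type*}
    (H : I → Type*) [∀ i, NormedAddCommGroup (H i)] [∀ i, InnerProductSpace ℂ (H i)]
    [∀ i, CompleteSpace (H i)]
    (F : Finset I) (T : ∀ i, H i →L[ℂ] H i)
    (hT : ∀ i ∉ F, ContinuousLinearMap.adjoint (T i) * T i = 1 ∧
      T i * ContinuousLinearMap.adjoint (T i) = 1)
    (M : (⨂[ℂ] i, H i) →ₗ[ℂ] ⨂[ℂ] i, H i)
    (hM : M = PiTensorProduct.map (fun i => (T i : H i →ₗ[ℂ] H i)))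
    (Md : (⨂[ℂ] i, H i) →ₗ[ℂ] ⨂[ℂ] i, H i)
    (hMd : Md = PiTensorProduct.map
      (fun i => (ContinuousLinearMap.adjoint (T i) : H i →ₗ[ℂ] H i)))
    (B : unTensorSpan H → unTensorSpan H → ℂ)
    (Badd₁ : ∀ ξ ξ' η : unTensorSpan H, B (ξ + ξ') η = B ξ η + B ξ' η)
    (Bsmul₁ : ∀ (c : ℂ) (ξ η : unTensorSpan H), B (c • ξ) η = conj c * B ξ η)
    (Badd₂ : ∀ ξ η η' : unTensorSpan H, B ξ (η + η') = B ξ η + B ξ η')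
    (Bsmul₂ : ∀ (c : ℂ) (ξ η : unTensorSpan H), B ξ (c • η) = c * B ξ η)
    (Bh : ∀ (x y : ∀ i, H i) (hx : ∀ i, ‖x i‖ = 1) (hy : ∀ i, ‖y i‖ = 1)
      (hmx : PiTensorProduct.tprod ℂ x ∈ unTensorSpan H)
      (hmy : PiTensorProduct.tprod ℂ y ∈ unTensorSpan H),
      B ⟨PiTensorProduct.tprod ℂ x, hmx⟩ ⟨PiTensorProduct.tprod ℂ y, hmy⟩ = hform H x y) :
    (∀ ξ : ⨂[ℂ] i, H i, ξ ∈ unTensorSpan H → M ξ ∈ unTensorSpan H) ∧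
    (∀ (ξ : unTensorSpan H) (hm : M ξ.1 ∈ unTensorSpan H),
      (B ⟨M ξ.1, hm⟩ ⟨M ξ.1, hm⟩).re ≤ (∏ i ∈ F, ‖T i‖ ^ 2) * (B ξ ξ).re) ∧
    (∀ (ξ η : unTensorSpan H) (hm : M ξ.1 ∈ unTensorSpan H)
      (hm' : Md η.1 ∈ unTensorSpan H),
      B ⟨M ξ.1, hm⟩ η = B ξ ⟨Md η.1, hm'⟩) := by
  have hunit : ∀ i ∉ F, T i ∈ unitary (H i →L[ℂ] H i) := fun i hi => Unitary.mem_iff.2 (hT i hi)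
  have hTnorm : ∀ i ∉ F, ∀ u, ‖T i u‖ = ‖u‖ := fun i hi =>
    ContinuousLinearMap.norm_map_of_mem_unitary (hunit i hi)
  have hTdnorm : ∀ i ∉ F, ∀ u, ‖(T i).adjoint u‖ = ‖u‖ := fun i hi =>
    ContinuousLinearMap.norm_map_of_mem_unitary (Unitary.star_mem (hunit i hi))
  have hMmem : ∀ ξ ∈ unTensorSpan H, M ξ ∈ unTensorSpan H :=
    hM ▸ fun _ => map_mem_unTensorSpan hTnorm
  have hMdmem : ∀ ξ ∈ unTensorSpan H, Md ξ ∈ unTensorSpan H :=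
    hMd ▸ fun _ => map_mem_unTensorSpan hTdnorm
  have hMtprod : ∀ (ξ : unTensorSpan H) x, (ξ : ⨂[ℂ] i, H i) = PiTensorProduct.tprod ℂ x →
      (M.restrict hMmem ξ : ⨂[ℂ] i, H i) = PiTensorProduct.tprod ℂ (fun i => T i (x i)) :=
    fun ξ x hξ => by simp [hM, hξ]
  have hMdtprod : ∀ (ξ : unTensorSpan H) x, (ξ : ⨂[ℂ] i, H i) = PiTensorProduct.tprod ℂ x →
      (Md.restrict hMdmem ξ : ⨂[ℂ] i, H i)
        = PiTensorProduct.tprod ℂ (fun i => (T i).adjoint (x i)) :=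
    fun ξ x hξ => by simp [hMd, hξ]
  let B' : unTensorSpan H →ₗ⋆[ℂ] unTensorSpan H →ₗ[ℂ] ℂ :=
    LinearMap.mk₂'ₛₗ (starRingEnd ℂ) (RingHom.id ℂ) B Badd₁ Bsmul₁ Badd₂ Bsmul₂
  have hB' : AgreesWithHForm B' := by
    rintro ⟨_, hξ⟩ ⟨_, hη⟩ x y hx hy rfl rfl
    exact Bh x y hx hy hξ hη
  refine ⟨hMmem, fun ξ _ => ?_, fun ξ η _ _ => ?_⟩
  · exact hB'.re_apply_map_le F T
      (fun i hi => ContinuousLinearMap.inner_map_map_of_mem_unitary (hunit i hi)) _ hMtprod ξ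
  · exact hB'.apply_map_left_eq_apply_map_right F T hTnorm hTdnorm _ _ hMtprod hMdtprod ξ η

/-- For a family of bounded operators `T_i` on Hilbert spaces `H_i` which are unitary outside
a finite set `F`, the induced map `M` on `⨂_{i∈I} H_i` preserves `⨂^un_{i∈I} H_i`, is bounded
there (with norm at most `∏_{i∈F} ‖T_i‖` for the form `B`), and has`M†` as its adjoint
with respect to `B`. -/
theorem piTensor_map_operator_bounded {I : Type*} [Infinite I]
    (H : I → Type*) [∀ i, NormedAddCommGroup (H i)] [∀ i, InnerProductSpace ℂ (H i)]
    [∀ i, CompleteSpace (H i)]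
    (F : Finset I) (T : ∀ i, H i →L[ℂ] H i)
    (hT : ∀ i ∉ F, ContinuousLinearMap.adjoint (T i) * T i = 1 ∧
      T i * ContinuousLinearMap.adjoint (T i) = 1)
    (M : (⨂[ℂ] i, H i) →ₗ[ℂ] ⨂[ℂ] i, H i)
    (hM : M = PiTensorProduct.map (fun i => (T i : H i →ₗ[ℂ] H i)))
    (Md : (⨂[ℂ] i, H i) →ₗ[ℂ] ⨂[ℂ] i, H i)
    (hMd : Md = PiTensorProduct.map
      (fun i => (ContinuousLinearMap.adjoint (T i) : H i →ₗ[ℂ] H i)))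
    (B : unTensorSpan H → unTensorSpan H → ℂ)
    (Badd₁ : ∀ ξ ξ' η : unTensorSpan H, B (ξ + ξ') η = B ξ η + B ξ' η)
    (Bsmul₁ : ∀ (c : ℂ) (ξ η : unTensorSpan H), B (c • ξ) η = conj c * B ξ η)
    (Badd₂ : ∀ ξ η η' : unTensorSpan H, B ξ (η + η') = B ξ η + B ξ η')
    (Bsmul₂ : ∀ (c : ℂ) (ξ η : unTensorSpan H), B ξ (c • η) = c * B ξ η)
    (Bh : ∀ (x y : ∀ i, H i) (hx : ∀ i, ‖x i‖ = 1) (hy : ∀ i, ‖y i‖ = 1)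
      (hmx : PiTensorProduct.tprod ℂ x ∈ unTensorSpan H)
      (hmy : PiTensorProduct.tprod ℂ y ∈ unTensorSpan H),
      B ⟨PiTensorProduct.tprod ℂ x, hmx⟩ ⟨PiTensorProduct.tprod ℂ y, hmy⟩ = hform H x y) :
    (∀ ξ : ⨂[ℂ] i, H i, ξ ∈ unTensorSpan H → M ξ ∈ unTensorSpan H) ∧
    (∀ (ξ : unTensorSpan H) (hm : M ξ.1 ∈ unTensorSpan H),
      (B ⟨M ξ.1, hm⟩ ⟨M ξ.1, hm⟩).re ≤ (∏ i ∈ F, ‖T i‖ ^ 2) * (B ξ ξ).re) ∧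
    (∀ (ξ η : unTensorSpan H) (hm : M ξ.1 ∈ unTensorSpan H)
      (hm' : Md η.1 ∈ unTensorSpan H),
      B ⟨M ξ.1, hm⟩ η = B ξ ⟨Md η.1, hm'⟩) :=
  piTensor_map_operator_bounded_general H F T hT M hM Md hMd B Badd₁ Bsmul₁ Badd₂ Bsmul₂ Bh
end
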